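/- arXiv:2411.03613 — 6 statements merged into one kernel-verified Lean document; each statement's English description precedes it below -/
import Mathlib

section
/- Let v₋ > 0 be a constant. There exist positive constants c₁ and c₂ such that: (i) for any w ∈ [v₋/2, 2v₋] and any v ∈ (v₋/3, 3v₋), c₁|v - w|² ≤ Φ(v/w) ≤ c₁⁻¹|v - w|²; and (ii) for any w ∈ [v₋/2, 2v₋] and any v > 0 with v ∉ (v₋/3, 3v₋), c₂|v - w| ≤ Φ(v/w). -/
set_option maxHeartbeats 1000000


noncomputable def Phi (z : ℝ) : ℝ := z - 1 - Real.log z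

lemma Phi_sqrt_lower (z : ℝ) (hz : 0 < z) : (Real.sqrt z - 1) ^ 2 ≤ Phi z := by
  have hs : 0 < Real.sqrt z := Real.sqrt_pos.mpr hz
  have h1 : Real.log (Real.sqrt z) ≤ Real.sqrt z - 1 := Real.log_le_sub_one_of_pos hs
  have h2 : Real.log z = 2 * Real.log (Real.sqrt z) := by
    conv_lhs => rw [← Real.sq_sqrt hz.le]
    rw [Real.log_pow]; norm_num
  have h3 : Real.sqrt z ^ 2 = z := Real.sq_sqrt hz.le
  unfold Phi
  nlinarith [h1, h2, h3]

lemma Phi_upper (z : ℝ) (hz : 0 < z) : Phi z ≤ (z - 1) ^ 2 / z := by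
  have hzi : 0 < z⁻¹ := inv_pos.mpr hz
  have h1 : Real.log z⁻¹ ≤ z⁻¹ - 1 := Real.log_le_sub_one_of_pos hzi
  rw [Real.log_inv] at h1
  unfold Phi
  rw [div_eq_inv_mul, ← sub_nonneg]
  have hmul : z * z⁻¹ = 1 := mul_inv_cancel₀ hz.ne'
  nlinarith [h1, hmul, sq_nonneg (z - 1)]

/-- Locally quadratic and globally linear lower bounds for the relative entropy `Φ(v/w)`. -/
theorem Phi_quadratic_and_linear_bounds (vm : ℝ) (hvm : 0 < vm) :
    ∃ c₁ c₂ : ℝ, 0 < c₁ ∧ 0 < c₂ ∧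
      ∀ w ∈ Set.Icc (vm / 2) (2 * vm),
        (∀ v ∈ Set.Ioo (vm / 3) (3 * vm),
            c₁ * |v - w| ^ 2 ≤ Phi (v / w) ∧ Phi (v / w) ≤ c₁⁻¹ * |v - w| ^ 2) ∧
        (∀ v : ℝ, 0 < v → v ∉ Set.Ioo (vm / 3) (3 * vm) →
            c₂ * |v - w| ≤ Phi (v / w)) := by
  refine ⟨min (1 / (48 * vm ^ 2)) (vm ^ 2 / 24), 1 / (72 * vm), ?_, ?_, ?_⟩
  · positivity
  · positivity
  intro w hw
  obtain ⟨hw1, hw2⟩ := hw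
  have hwpos : 0 < w := lt_of_lt_of_le (by positivity) hw1
  constructor
  · -- Part (i)
    intro v hv
    obtain ⟨hv1, hv2⟩ := hv
    have hvpos : 0 < v := lt_trans (by positivity) hv1
    set z := v / w with hz_def
    have hzpos : 0 < z := div_pos hvpos hwpos
    have hzlt : z < 6 := by
      rw [hz_def, div_lt_iff₀ hwpos]; nlinarith
    have hzgt : 1 / 6 < z := by
      rw [hz_def, div_lt_div_iff₀ (by norm_num) hwpos]; nlinarith
    have hs : 0 ≤ Real.sqrt z := Real.sqrt_nonneg z
    have hsq : Real.sqrt z ^ 2 = z := Real.sq_sqrt hzpos.le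
    have hslt : Real.sqrt z ≤ 49 / 20 := by
      have : Real.sqrt z ≤ Real.sqrt ((49 / 20) ^ 2) :=
        Real.sqrt_le_sqrt (by nlinarith)
      rwa [Real.sqrt_sq (by norm_num)] at this
    have hlow : (Real.sqrt z - 1) ^ 2 ≤ Phi z := Phi_sqrt_lower z hzpos
    have hPhinn : 0 ≤ Phi z := le_trans (sq_nonneg _) hlow
    -- (z-1)^2 ≤ 12 * Phi z
    have h12 : (z - 1) ^ 2 ≤ 12 * Phi z := by
      nlinarith [hlow, hsq, hslt, hs, sq_nonneg (Real.sqrt z - 1),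
        mul_nonneg (sq_nonneg (Real.sqrt z - 1)) (sub_nonneg.mpr hslt)]
    have hkey : (z - 1) ^ 2 * w ^ 2 = (v - w) ^ 2 := by
      rw [hz_def]; field_simp
    have hwsq_le : w ^ 2 ≤ 4 * vm ^ 2 := by nlinarith
    have hwsq_ge : vm ^ 2 / 4 ≤ w ^ 2 := by nlinarith
    rw [sq_abs]
    constructor
    · -- lower bound
      have hc : min (1 / (48 * vm ^ 2)) (vm ^ 2 / 24) ≤ 1 / (48 * vm ^ 2) :=
        min_le_left _ _
      have h48 : (v - w) ^ 2 ≤ 48 * vm ^ 2 * Phi z := by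
        nlinarith [mul_le_mul h12 hwsq_le (sq_nonneg w) (by positivity : (0:ℝ) ≤ 12 * Phi z)]
      have hvw : 0 ≤ (v - w) ^ 2 := sq_nonneg _
      calc min (1 / (48 * vm ^ 2)) (vm ^ 2 / 24) * (v - w) ^ 2
          ≤ 1 / (48 * vm ^ 2) * (v - w) ^ 2 :=
            mul_le_mul_of_nonneg_right hc hvw
        _ ≤ Phi z := by
            rw [div_mul_eq_mul_div, div_le_iff₀ (by positivity : (0:ℝ) < 48 * vm ^ 2)]
            nlinarith [h48]
    · -- upper bound
      have hup : Phi z ≤ (z - 1) ^ 2 / z := Phi_upper z hzpos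
      have h6 : (z - 1) ^ 2 / z ≤ 6 * (z - 1) ^ 2 := by
        rw [div_le_iff₀ hzpos]
        have h := mul_nonneg (by linarith : (0:ℝ) ≤ 6 * z - 1) (sq_nonneg (z - 1))
        nlinarith [h]
      have h6' : Phi z ≤ 6 * (z - 1) ^ 2 := le_trans hup h6
      have hstep : vm ^ 2 * Phi z ≤ 24 * (v - w) ^ 2 := by
        nlinarith [mul_le_mul_of_nonneg_left h6' (by positivity : (0:ℝ) ≤ vm ^ 2),
          mul_nonneg (sq_nonneg (z - 1)) (sub_nonneg.mpr hwsq_ge), hkey]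
      have hmain : Phi z ≤ 24 / vm ^ 2 * (v - w) ^ 2 := by
        rw [div_mul_eq_mul_div, le_div_iff₀ (by positivity : (0:ℝ) < vm ^ 2)]
        linarith
      have hcinv : 24 / vm ^ 2 ≤ (min (1 / (48 * vm ^ 2)) (vm ^ 2 / 24))⁻¹ := by
        have h1 : min (1 / (48 * vm ^ 2)) (vm ^ 2 / 24) ≤ vm ^ 2 / 24 := min_le_right _ _
        have h2 : (0:ℝ) < min (1 / (48 * vm ^ 2)) (vm ^ 2 / 24) := by positivity
        calc 24 / vm ^ 2 = (vm ^ 2 / 24)⁻¹ := by field_simp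
          _ ≤ _ := by exact inv_anti₀ h2 h1
      calc Phi z ≤ 24 / vm ^ 2 * (v - w) ^ 2 := hmain
        _ ≤ (min (1 / (48 * vm ^ 2)) (vm ^ 2 / 24))⁻¹ * (v - w) ^ 2 :=
            mul_le_mul_of_nonneg_right hcinv (sq_nonneg _)
  · -- Part (ii)
    intro v hvpos hnot
    rw [Set.mem_Ioo, not_and_or, not_lt, not_lt] at hnot
    set z := v / w with hz_def
    have hzpos : 0 < z := div_pos hvpos hwpos
    have hs : 0 ≤ Real.sqrt z := Real.sqrt_nonneg z
    have hsq : Real.sqrt z ^ 2 = z := Real.sq_sqrt hzpos.le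
    have hlow : (Real.sqrt z - 1) ^ 2 ≤ Phi z := Phi_sqrt_lower z hzpos
    rcases hnot with hsmall | hbig
    · -- v ≤ vm/3
      have hzle : z ≤ 2 / 3 := by
        rw [hz_def, div_le_div_iff₀ hwpos (by norm_num)]; nlinarith
      have hsle : Real.sqrt z ≤ 5 / 6 := by
        have : Real.sqrt z ≤ Real.sqrt ((5 / 6) ^ 2) :=
          Real.sqrt_le_sqrt (by nlinarith)
        rwa [Real.sqrt_sq (by norm_num)] at this
      have hPhi : 1 / 36 ≤ Phi z := by nlinarith [hlow]
      have habs : |v - w| ≤ 2 * vm := by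
        rw [abs_le]; constructor <;> nlinarith
      have : 1 / (72 * vm) * |v - w| ≤ 1 / (72 * vm) * (2 * vm) :=
        mul_le_mul_of_nonneg_left habs (by positivity)
      calc 1 / (72 * vm) * |v - w| ≤ 1 / (72 * vm) * (2 * vm) := this
        _ = 1 / 36 := by field_simp; ring
        _ ≤ Phi z := hPhi
    · -- 3 vm ≤ v
      have hzge : 3 / 2 ≤ z := by
        rw [hz_def, div_le_div_iff₀ (by norm_num) hwpos]; nlinarith
      have hsge : 11 / 9 ≤ Real.sqrt z := by
        have : Real.sqrt ((11 / 9) ^ 2) ≤ Real.sqrt z :=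
          Real.sqrt_le_sqrt (by nlinarith)
        rwa [Real.sqrt_sq (by norm_num)] at this
      have hPhi : (z - 1) / 10 ≤ Phi z := by
        nlinarith [hlow, hsq, hsge,
          mul_nonneg (by linarith : (0:ℝ) ≤ Real.sqrt z - 1)
            (by linarith : (0:ℝ) ≤ 9 * Real.sqrt z - 11)]
      have hvw : 0 ≤ v - w := by nlinarith
      rw [abs_of_nonneg hvw]
      have hkey : v - w = w * (z - 1) := by rw [hz_def]; field_simp
      have hz1 : 0 ≤ z - 1 := by linarith
      have h1 : v - w ≤ 2 * vm * (z - 1) := by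
        rw [hkey]; nlinarith
      have : 1 / (72 * vm) * (v - w) ≤ 1 / (72 * vm) * (2 * vm * (z - 1)) :=
        mul_le_mul_of_nonneg_left h1 (by positivity)
      calc 1 / (72 * vm) * (v - w) ≤ 1 / (72 * vm) * (2 * vm * (z - 1)) := this
        _ = (z - 1) / 36 := by field_simp; ring
        _ ≤ (z - 1) / 10 := by
            apply div_le_div_of_nonneg_left hz1 <;> norm_num
        _ ≤ Phi z := hPhi
end

section
/- Let m, M > 0 with m ≤ M. For any δ* ∈ (0, m/2) there exists a constant c₅ > 0 such that for all w ∈ [m/2, 2M] and all u, v > 0 satisfying |w - v| > δ*, |w - u| ≤ δ*, and either w ≤ u ≤ v or v ≤ u ≤ w, one has Φ(v/w) - Φ(u/w) ≥ c₅|v - u|. -/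
/-!
On `y > 0` the function `y ↦ Φ(y / w)` is convex with derivative `1 / w - 1 / y`, which vanishes
at `y = w`. Split `[u, v]` at its midpoint `p`: on the half next to `u` the increment is
nonnegative because `u` lies between `w` and `p`, while on the far half the slope is at least
`|1 / w - 1 / p|`, and `p` is at distance more than `δ* / 2` from `w`.
-/

theorem tangent_le_Phi_div_sub_Phi_div {w a b : ℝ} (hw : 0 < w) (ha : 0 < a) (hb : 0 < b) :
    (1 / w - 1 / a) * (b - a) ≤ Phi (b / w) - Phi (a / w) := by
  have hlog : Real.log (b / a) ≤ b / a - 1 := Real.log_le_sub_one_of_pos (by positivity)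
  have hPhi : Phi (b / w) - Phi (a / w) = (b - a) / w - Real.log (b / a) := by
    unfold Phi
    rw [Real.log_div hb.ne' hw.ne', Real.log_div ha.ne' hw.ne', Real.log_div hb.ne' ha.ne']
    ring
  have htangent : (1 / w - 1 / a) * (b - a) = (b - a) / w - (b / a - 1) := by
    field_simp
  linarith

theorem midpoint_slope_le_Phi_div_sub_Phi_div {w u v : ℝ} (hw : 0 < w) (hu : 0 < u)
    (hv : 0 < v) (hbetween : (w ≤ u ∧ u ≤ v) ∨ (v ≤ u ∧ u ≤ w)) :
    |1 / w - 1 / ((u + v) / 2)| * (|v - u| / 2) ≤ Phi (v / w) - Phi (u / w) := by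
  set p := (u + v) / 2 with hp
  have hp_pos : 0 < p := by positivity
  have hfar := tangent_le_Phi_div_sub_Phi_div hw hp_pos hv
  have hnear := tangent_le_Phi_div_sub_Phi_div hw hu hp_pos
  have hnear_nonneg : 0 ≤ (1 / w - 1 / u) * (p - u) := by
    rcases hbetween with ⟨hwu, huv⟩ | ⟨hvu, huw⟩
    · exact mul_nonneg (sub_nonneg.2 (one_div_le_one_div_of_le hw hwu)) (by linarith)
    · exact mul_nonneg_of_nonpos_of_nonpos
        (sub_nonpos.2 (one_div_le_one_div_of_le hu huw)) (by linarith)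
  have hfar_slope : 0 ≤ (1 / w - 1 / p) * (v - u) := by
    rcases hbetween with ⟨hwu, huv⟩ | ⟨hvu, huw⟩
    · exact mul_nonneg (sub_nonneg.2 (one_div_le_one_div_of_le hw (by linarith)))
        (by linarith)
    · exact mul_nonneg_of_nonpos_of_nonpos
        (sub_nonpos.2 (one_div_le_one_div_of_le hp_pos (by linarith))) (by linarith)
  have hsplit : |1 / w - 1 / p| * (|v - u| / 2) = (1 / w - 1 / p) * (v - p) := by
    rw [mul_div_assoc', ← abs_mul, abs_of_nonneg hfar_slope, hp]
    ring
  linarith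

theorem one_div_sub_one_div_add_le_abs {w ε p : ℝ} (hw : 0 < w) (hε : 0 < ε) (hp : 0 < p)
    (hwp : ε ≤ |p - w|) : 1 / w - 1 / (w + ε) ≤ |1 / w - 1 / p| := by
  rcases le_abs'.1 hwp with hleft | hright
  · have hconvex : 1 / w - 1 / (w + ε) ≤ 1 / (w - ε) - 1 / w := by
      rw [div_sub_div _ _ (by linarith) (by linarith), div_sub_div _ _ (by linarith) hw.ne']
      apply div_le_div₀ (by nlinarith) (by nlinarith) (by nlinarith) (by nlinarith)
    calc 1 / w - 1 / (w + ε) ≤ 1 / (w - ε) - 1 / w := hconvex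
      _ ≤ 1 / p - 1 / w := by gcongr; linarith
      _ ≤ |1 / w - 1 / p| := by rw [abs_sub_comm]; exact le_abs_self _
  · calc 1 / w - 1 / (w + ε) ≤ 1 / w - 1 / p := by gcongr; linarith
      _ ≤ |1 / w - 1 / p| := le_abs_self _

theorem Phi_difference_linear_lower_bound_general (m M : ℝ) (hM : 0 < M)
    (δs : ℝ) (hδs : δs ∈ Set.Ioo 0 (m / 2)) :
    ∃ c₅ : ℝ, 0 < c₅ ∧
      ∀ w ∈ Set.Icc (m / 2) (2 * M), ∀ u v : ℝ, 0 < u → 0 < v →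
        δs < |w - v| → |w - u| ≤ δs →
        ((w ≤ u ∧ u ≤ v) ∨ (v ≤ u ∧ u ≤ w)) →
        c₅ * |v - u| ≤ Phi (v / w) - Phi (u / w) := by
  obtain ⟨hδ, hδm⟩ := hδs
  refine ⟨δs / (24 * M ^ 2), by positivity, ?_⟩
  rintro w ⟨hmw, hwM⟩ u v hu hv hv_far - hbetween
  have hδw : δs < w := by linarith
  have hw : 0 < w := by linarith
  have hmid_far : δs / 2 ≤ |(u + v) / 2 - w| := by
    rw [abs_sub_comm] at hv_far
    rcases hbetween with ⟨hwu, huv⟩ | ⟨hvu, huw⟩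
    · rw [abs_of_nonneg (by linarith)] at hv_far ⊢; linarith
    · rw [abs_of_nonpos (by linarith)] at hv_far ⊢; linarith
  have hconst : δs / (24 * M ^ 2) ≤ (1 / w - 1 / (w + δs / 2)) / 2 := by
    rw [show (1 / w - 1 / (w + δs / 2)) / 2 = δs / (2 * w * (2 * w + δs)) by field_simp; ring]
    exact div_le_div_of_nonneg_left hδ.le (by positivity) (by nlinarith)
  calc δs / (24 * M ^ 2) * |v - u|
      ≤ (1 / w - 1 / (w + δs / 2)) * (|v - u| / 2) := by nlinarith [abs_nonneg (v - u)]
    _ ≤ |1 / w - 1 / ((u + v) / 2)| * (|v - u| / 2) := by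
        gcongr
        exact one_div_sub_one_div_add_le_abs hw (by linarith) (by positivity) hmid_far
    _ ≤ Phi (v / w) - Phi (u / w) := midpoint_slope_le_Phi_div_sub_Phi_div hw hu hv hbetween

/-- Linear lower bound on `Φ(v/w) - Φ(u/w)` when `v` is outside and `u` inside
a `δ*`-neighborhood of `w`. -/
theorem Phi_difference_linear_lower_bound (m M : ℝ) (hm : 0 < m) (hM : 0 < M)
    (hmM : m ≤ M) (δs : ℝ) (hδs : δs ∈ Set.Ioo 0 (m / 2)) :
    ∃ c₅ : ℝ, 0 < c₅ ∧
      ∀ w ∈ Set.Icc (m / 2) (2 * M), ∀ u v : ℝ, 0 < u → 0 < v →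
        δs < |w - v| → |w - u| ≤ δs →
        ((w ≤ u ∧ u ≤ v) ∨ (v ≤ u ∧ u ≤ w)) →
        c₅ * |v - u| ≤ Phi (v / w) - Phi (u / w) :=
  Phi_difference_linear_lower_bound_general m M hM δs hδs
end

section
/- Let v₋ > 0. There exist positive constants C and δ* such that for any δ ∈ (0, δ*) and any v, w > 0 with |1/w - 1/v₋| ≤ δ, if either Φ(v/w) < δ or |1/v - 1/w| < δ, then |v - w|² ≤ C·Φ(v/w). -/
/-!
Since `log √z ≤ √z - 1`, we have `Φ(z) ≥ (√z - 1)²`, and multiplying by `(√z + 1)²` gives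
`(z - 1)² ≤ (√z + 1)² Φ(z)`. Writing `v - w = w (z - 1)` with `z = v / w`, it remains to bound
`w` and `z`: the condition on `1/w` pins `w` within a factor two of `v₋`, and either smallness
hypothesis forces `z < 4` (through `Φ(z) ≥ (√z - 1)²`, resp. by pinning `v` near `v₋` as well).
-/

open Real

lemma sq_sqrt_sub_one_le_Phi {z : ℝ} (hz : 0 < z) : (√z - 1) ^ 2 ≤ Phi z := by
  have hlog : log √z ≤ √z - 1 := log_le_sub_one_of_pos (sqrt_pos.2 hz)
  have hlog_sqrt : log z = 2 * log √z := by rw [log_sqrt hz.le]; ring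
  have hsq : √z ^ 2 = z := sq_sqrt hz.le
  unfold Phi
  nlinarith

lemma Phi_nonneg {z : ℝ} (hz : 0 < z) : 0 ≤ Phi z :=
  (sq_nonneg _).trans (sq_sqrt_sub_one_le_Phi hz)

lemma sq_sub_one_le_mul_Phi {z : ℝ} (hz : 0 < z) : (z - 1) ^ 2 ≤ (√z + 1) ^ 2 * Phi z := by
  have hfactor : (z - 1) ^ 2 = (√z + 1) ^ 2 * (√z - 1) ^ 2 := by
    rw [← mul_pow, ← sq_sub_sq, sq_sqrt hz.le, one_pow]
  rw [hfactor]
  exact mul_le_mul_of_nonneg_left (sq_sqrt_sub_one_le_Phi hz) (sq_nonneg _)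

lemma sq_sub_one_le_nine_mul_Phi {z : ℝ} (hz : 0 < z) (hz4 : z < 4) :
    (z - 1) ^ 2 ≤ 9 * Phi z := by
  have hsqrt : √z < 2 := (sqrt_lt' two_pos).2 (by linarith)
  have hcoef : (√z + 1) ^ 2 ≤ 9 := by nlinarith [sqrt_nonneg z]
  calc (z - 1) ^ 2 ≤ (√z + 1) ^ 2 * Phi z := sq_sub_one_le_mul_Phi hz
    _ ≤ 9 * Phi z := mul_le_mul_of_nonneg_right hcoef (Phi_nonneg hz)

lemma lt_four_of_Phi_lt_one {z : ℝ} (hz : 0 < z) (h : Phi z < 1) : z < 4 := by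
  have hsq : (√z - 1) ^ 2 < 1 := (sq_sqrt_sub_one_le_Phi hz).trans_lt h
  have hsqrt : √z < 2 := by nlinarith [sqrt_nonneg z]
  nlinarith [sq_sqrt hz.le, sqrt_nonneg z]

lemma mem_Ioo_of_abs_one_div_sub_lt {a x : ℝ} (ha : 0 < a) (hx : 0 < x)
    (h : |1 / x - 1 / a| < 1 / (2 * a)) : x ∈ Set.Ioo (a / 2) (2 * a) := by
  obtain ⟨hlow, hupp⟩ := abs_lt.1 h
  have hhalf : 1 / a - 1 / (2 * a) = 1 / (2 * a) := by field_simp; ring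
  have hthree : 1 / a + 1 / (2 * a) < 1 / (a / 2) := by field_simp; norm_num
  constructor
  · exact (one_div_lt_one_div hx (half_pos ha)).1 (by linarith)
  · exact (one_div_lt_one_div (by positivity) hx).1 (by linarith)

/-- The relative entropy controls the squared distance when it (or `|1/v - 1/w|`) is small. -/
theorem Phi_controls_squared_distance (vm : ℝ) (hvm : 0 < vm) :
    ∃ C δs : ℝ, 0 < C ∧ 0 < δs ∧
      ∀ δ ∈ Set.Ioo (0 : ℝ) δs, ∀ v w : ℝ, 0 < v → 0 < w →
        |1 / w - 1 / vm| ≤ δ →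
        (Phi (v / w) < δ ∨ |1 / v - 1 / w| < δ) →
        |v - w| ^ 2 ≤ C * Phi (v / w) := by
  refine ⟨36 * vm ^ 2, min (1 / (4 * vm)) 1, by positivity, by positivity, ?_⟩
  rintro δ ⟨hδ0, hδs⟩ v w hv hw hwvm hcase
  have hδ_quarter : δ < 1 / (4 * vm) := hδs.trans_le (min_le_left _ _)
  have hquarter : 1 / (4 * vm) + 1 / (4 * vm) = 1 / (2 * vm) := by field_simp; ring
  obtain ⟨hw_low, hw_upp⟩ := mem_Ioo_of_abs_one_div_sub_lt hvm hw (by linarith)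
  have hz : 0 < v / w := div_pos hv hw
  have hz4 : v / w < 4 := by
    rcases hcase with hPhi | hvw
    · exact lt_four_of_Phi_lt_one hz (hPhi.trans (hδs.trans_le (min_le_right _ _)))
    · have hv_upp := (mem_Ioo_of_abs_one_div_sub_lt hvm hv (by
        linarith [abs_sub_le (1 / v) (1 / w) (1 / vm)])).2
      rw [div_lt_iff₀ hw]
      linarith
  have hw_sq : w ^ 2 ≤ 4 * vm ^ 2 := by nlinarith
  calc |v - w| ^ 2 = w ^ 2 * (v / w - 1) ^ 2 := by rw [sq_abs]; field_simp
    _ ≤ (4 * vm ^ 2) * (9 * Phi (v / w)) :=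
      mul_le_mul hw_sq (sq_sub_one_le_nine_mul_Phi hz hz4) (sq_nonneg _) (by positivity)
    _ = 36 * vm ^ 2 * Phi (v / w) := by ring
end

section
/- Let ṽ: ℝ → ℝ be a smooth increasing function with limits v₋ < v₊ at ∓∞, ṽ(0) = (v₋+v₊)/2, satisfying C⁻¹(v₊ - ṽ(ξ))(ṽ(ξ) - v₋) ≤ ṽ'(ξ) ≤ C(v₊ - ṽ(ξ))(ṽ(ξ) - v₋) for all ξ ∈ ℝ, for some constant C > 0, with ε := v₊ - v₋ > 0. Then ṽ(ζ) - v₋ ≥ (ε/2)e^{-Cε|ζ|} for ζ ≤ 0, and v₊ - ṽ(ζ) ≥ (ε/2)e^{-Cε|ζ|} for ζ ≥ 0. -/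
open Filter MeasureTheory

/-- Exponential lower bounds on the distance of a monotone shock profile from its endpoints. -/
theorem shock_exponential_lower_bounds (vm vp ε C : ℝ) (vS : ℝ → ℝ)
    (hC : 0 < C) (hlt : vm < vp) (hε : ε = vp - vm)
    (hsmooth : ContDiff ℝ (⊤ : ℕ∞) vS) (hmono : StrictMono vS)
    (hbot : Tendsto vS atBot (nhds vm)) (htop : Tendsto vS atTop (nhds vp))
    (hmid : vS 0 = (vm + vp) / 2)
    (hlog : ∀ ξ : ℝ, C⁻¹ * (vp - vS ξ) * (vS ξ - vm) ≤ deriv vS ξ ∧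
        deriv vS ξ ≤ C * (vp - vS ξ) * (vS ξ - vm)) :
    (∀ ζ : ℝ, ζ ≤ 0 → ε / 2 * Real.exp (-(C * ε * |ζ|)) ≤ vS ζ - vm) ∧
    (∀ ζ : ℝ, 0 ≤ ζ → ε / 2 * Real.exp (-(C * ε * |ζ|)) ≤ vp - vS ζ) := by
  have hdiff : Differentiable ℝ vS := hsmooth.differentiable (by simp)
  have hεpos : 0 < ε := by rw [hε]; linarith
  have hlb : ∀ ξ, vm < vS ξ := by
    intro ξ
    have h1 : vm ≤ vS (ξ - 1) := by
      apply le_of_tendsto hbot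
      filter_upwards [eventually_le_atBot (ξ - 1)] with t ht
      exact hmono.monotone ht
    exact lt_of_le_of_lt h1 (hmono (by linarith))
  have hub : ∀ ξ, vS ξ < vp := by
    intro ξ
    have h1 : vS (ξ + 1) ≤ vp := by
      apply ge_of_tendsto htop
      filter_upwards [eventually_ge_atTop (ξ + 1)] with t ht
      exact hmono.monotone ht
    exact lt_of_lt_of_le (hmono (by linarith)) h1
  have hmid' : vS 0 - vm = ε / 2 := by rw [hmid, hε]; ring
  have hmid'' : vp - vS 0 = ε / 2 := by rw [hmid, hε]; ring
  constructor
  · -- left bound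
    set h : ℝ → ℝ := fun ξ => C * ε * ξ - Real.log (vS ξ - vm) with hh
    have hder : ∀ ξ, HasDerivAt h (C * ε - deriv vS ξ / (vS ξ - vm)) ξ := by
      intro ξ
      have h1 : HasDerivAt (fun ξ => C * ε * ξ) (C * ε) ξ := by
        simpa using (hasDerivAt_id ξ).const_mul (C * ε)
      have h2 : HasDerivAt (fun ξ => Real.log (vS ξ - vm)) (deriv vS ξ / (vS ξ - vm)) ξ :=
        (((hdiff ξ).hasDerivAt).sub_const vm).log (sub_ne_zero.2 (hlb ξ).ne')
      exact h1.sub h2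
    have hmonoh : Monotone h := by
      apply monotone_of_deriv_nonneg (fun ξ => (hder ξ).differentiableAt)
      intro ξ
      rw [(hder ξ).deriv]
      have hp1 : 0 < vS ξ - vm := by have := hlb ξ; linarith
      have hp2 : vp - vS ξ ≤ ε := by have := hlb ξ; rw [hε]; linarith
      have hp3 : 0 ≤ vp - vS ξ := le_of_lt (by have := hub ξ; linarith)
      have h4 : deriv vS ξ ≤ C * ε * (vS ξ - vm) := by
        have := (hlog ξ).2
        nlinarith [mul_nonneg (mul_nonneg hC.le hp1.le) (sub_nonneg.2 hp2)]
      rw [sub_nonneg, div_le_iff₀ hp1]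
      exact h4
    intro ζ hζ
    have hle : h ζ ≤ h 0 := hmonoh hζ
    simp only [hh, mul_zero, zero_sub, hmid'] at hle
    have hlog1 : Real.log (ε / 2) + C * ε * ζ ≤ Real.log (vS ζ - vm) := by linarith
    have habs : |ζ| = -ζ := abs_of_nonpos hζ
    have : Real.exp (Real.log (ε / 2) + C * ε * ζ) ≤ Real.exp (Real.log (vS ζ - vm)) :=
      Real.exp_le_exp.2 hlog1
    rw [Real.exp_add, Real.exp_log (by positivity),
      Real.exp_log (by have := hlb ζ; linarith)] at this
    rw [habs]
    have heq : -(C * ε * -ζ) = C * ε * ζ := by ring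
    rw [heq]
    exact this
  · -- right bound
    set h : ℝ → ℝ := fun ξ => C * ε * ξ + Real.log (vp - vS ξ) with hh
    have hder : ∀ ξ, HasDerivAt h (C * ε + -deriv vS ξ / (vp - vS ξ)) ξ := by
      intro ξ
      have h1 : HasDerivAt (fun ξ => C * ε * ξ) (C * ε) ξ := by
        simpa using (hasDerivAt_id ξ).const_mul (C * ε)
      have h2 : HasDerivAt (fun ξ => Real.log (vp - vS ξ)) (-deriv vS ξ / (vp - vS ξ)) ξ :=
        (((hdiff ξ).hasDerivAt).const_sub vp).log (sub_ne_zero.2 (hub ξ).ne')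
      exact h1.add h2
    have hmonoh : Monotone h := by
      apply monotone_of_deriv_nonneg (fun ξ => (hder ξ).differentiableAt)
      intro ξ
      rw [(hder ξ).deriv]
      have hp1 : 0 < vp - vS ξ := by have := hub ξ; linarith
      have hp2 : vS ξ - vm ≤ ε := by have := hub ξ; rw [hε]; linarith
      have hp3 : 0 ≤ vS ξ - vm := le_of_lt (by have := hlb ξ; linarith)
      have h4 : deriv vS ξ ≤ C * ε * (vp - vS ξ) := by
        have := (hlog ξ).2
        nlinarith [mul_nonneg (mul_nonneg hC.le hp1.le) (sub_nonneg.2 hp2)]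
      have : -(C * ε) ≤ -deriv vS ξ / (vp - vS ξ) := by
        rw [le_div_iff₀ hp1]
        nlinarith
      linarith
    intro ζ hζ
    have hle : h 0 ≤ h ζ := hmonoh hζ
    simp only [hh, mul_zero, zero_add, hmid''] at hle
    have hlog1 : Real.log (ε / 2) - C * ε * ζ ≤ Real.log (vp - vS ζ) := by linarith
    have habs : |ζ| = ζ := abs_of_nonneg hζ
    have : Real.exp (Real.log (ε / 2) - C * ε * ζ) ≤ Real.exp (Real.log (vp - vS ζ)) :=
      Real.exp_le_exp.2 hlog1
    rw [Real.exp_sub, Real.exp_log (by positivity),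
      Real.exp_log (by have := hub ζ; linarith)] at this
    rw [habs, Real.exp_neg, ← div_eq_mul_inv]
    exact this
end

section
/- Let ṽ: ℝ → ℝ be a smooth increasing function with limits v₋ < v₊ at ∓∞, ṽ(0) = (v₋+v₊)/2, ε := v₊ - v₋, satisfying C⁻¹(v₊ - ṽ)(ṽ - v₋) ≤ ṽ' ≤ C(v₊ - ṽ)(ṽ - v₋) for some C > 0. Then there is a constant C' > 0 (depending only on C) such that for any ξ₀ ∈ [-1/ε, 1/ε] and any smooth f: ℝ → ℝ with ∫_ℝ ṽ'(ξ)|f(ξ)| dξ < ∞, one has |∫_ℝ ṽ'(ξ) ∫_{ξ₀}^ξ f(ζ) dζ dξ| ≤ (C'/ε) ∫_ℝ ṽ'(ζ)|f(ζ)| dζ. -/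
open Filter MeasureTheory intervalIntegral

lemma half_bound (g f ψ : ℝ → ℝ) (a c : ℝ) (hc : 0 ≤ c)
    (hg : Continuous g) (hg0 : ∀ x, 0 ≤ g x) (hf : Continuous f)
    (hψd : ∀ x, HasDerivAt ψ (-(g x)) x) (hψ0 : ∀ x, 0 ≤ ψ x)
    (hψc : ∀ ζ, a ≤ ζ → ψ ζ ≤ c * g ζ)
    (hint : IntegrableOn (fun ζ => g ζ * |f ζ|) (Set.Ioi a)) :
    IntegrableOn (fun ξ => g ξ * ∫ ζ in a..ξ, f ζ) (Set.Ioi a) ∧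
    |∫ ξ in Set.Ioi a, g ξ * ∫ ζ in a..ξ, f ζ| ≤ c * ∫ ζ in Set.Ioi a, g ζ * |f ζ| := by
  have hfc : Continuous fun x => |f x| := hf.abs
  set F : ℝ → ℝ := fun ξ => ∫ ζ in a..ξ, f ζ with hF
  set A : ℝ → ℝ := fun ξ => ∫ ζ in a..ξ, |f ζ| with hA
  have hAd : ∀ x, HasDerivAt A (|f x|) x := fun x =>
    integral_hasDerivAt_right (hfc.intervalIntegrable a x)
      (hfc.stronglyMeasurableAtFilter _ _) hfc.continuousAt
  have hFd : ∀ x, HasDerivAt F (f x) x := fun x =>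
    integral_hasDerivAt_right (hf.intervalIntegrable a x)
      (hf.stronglyMeasurableAtFilter _ _) hf.continuousAt
  have hAc : Continuous A := by
    have : Differentiable ℝ A := fun x => (hAd x).differentiableAt
    exact this.continuous
  have hFc : Continuous F := by
    have : Differentiable ℝ F := fun x => (hFd x).differentiableAt
    exact this.continuous
  have hψcont : Continuous ψ := by
    have : Differentiable ℝ ψ := fun x => (hψd x).differentiableAt
    exact this.continuous
  have hA0 : ∀ x, a ≤ x → 0 ≤ A x := fun x hx =>
    intervalIntegral.integral_nonneg hx (fun u _ => abs_nonneg _)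
  have hFA : ∀ x, a ≤ x → |F x| ≤ A x := fun x hx =>
    intervalIntegral.abs_integral_le_integral_abs hx
  -- integrability of ψ * |f| on Ioi a
  have hintc : IntegrableOn (fun ζ => c * (g ζ * |f ζ|)) (Set.Ioi a) := hint.const_mul c
  have hintψ : IntegrableOn (fun ζ => ψ ζ * |f ζ|) (Set.Ioi a) := by
    refine hintc.mono' ((hψcont.mul hfc).aestronglyMeasurable) ?_
    filter_upwards [ae_restrict_mem measurableSet_Ioi] with ζ hζ
    rw [Real.norm_eq_abs, abs_of_nonneg (mul_nonneg (hψ0 ζ) (abs_nonneg _))]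
    exact le_trans (mul_le_mul_of_nonneg_right (hψc ζ (le_of_lt hζ)) (abs_nonneg _))
      (le_of_eq (mul_assoc _ _ _))
  set M : ℝ := ∫ ζ in Set.Ioi a, ψ ζ * |f ζ| with hM
  -- key interval bound
  have key : ∀ b, a ≤ b → (∫ ξ in a..b, g ξ * A ξ) ≤ M := by
    intro b hb
    have hderiv : ∀ x ∈ Set.uIcc a b,
        HasDerivAt (fun ξ => ψ ξ * A ξ) (-(g x) * A x + ψ x * |f x|) x :=
      fun x _ => (hψd x).mul (hAd x)
    have hcont1 : Continuous fun x => -(g x) * A x + ψ x * |f x| :=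
      (hg.neg.mul hAc).add (hψcont.mul hfc)
    have h1 : (∫ x in a..b, (-(g x) * A x + ψ x * |f x|)) = ψ b * A b - ψ a * A a :=
      intervalIntegral.integral_eq_sub_of_hasDerivAt hderiv (hcont1.intervalIntegrable a b)
    have h2 : (∫ x in a..b, (-(g x) * A x + ψ x * |f x|)) =
        -(∫ x in a..b, g x * A x) + ∫ x in a..b, ψ x * |f x| := by
      rw [intervalIntegral.integral_add (f := fun x => -(g x) * A x) (g := fun x => ψ x * |f x|) ((hg.neg.mul hAc).intervalIntegrable a b)
        ((hψcont.mul hfc).intervalIntegrable a b)]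
      congr 1
      rw [← intervalIntegral.integral_neg]
      congr 1; ext x; ring
    have hAa : A a = 0 := intervalIntegral.integral_same
    have h3 : (∫ x in a..b, g x * A x) = (∫ x in a..b, ψ x * |f x|) - ψ b * A b := by
      have := h1.symm.trans h2
      rw [hAa] at this
      linarith
    have h4 : (∫ x in a..b, ψ x * |f x|) ≤ M := by
      rw [intervalIntegral.integral_of_le hb]
      apply setIntegral_mono_set hintψ
      · filter_upwards with ζ using mul_nonneg (hψ0 ζ) (abs_nonneg _)
      · exact HasSubset.Subset.eventuallyLE Set.Ioc_subset_Ioi_self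
    have h5 : 0 ≤ ψ b * A b := mul_nonneg (hψ0 b) (hA0 b hb)
    linarith
  have hM0 : 0 ≤ M := by
    apply setIntegral_nonneg measurableSet_Ioi
    exact fun ζ _ => mul_nonneg (hψ0 ζ) (abs_nonneg _)
  -- integrability of g * A on Ioi a
  have hintgA : IntegrableOn (fun ξ => g ξ * A ξ) (Set.Ioi a) := by
    apply integrableOn_Ioi_of_intervalIntegral_norm_bounded M a
      (fun R : ℝ => ((hg.mul hAc).integrableOn_Ioc)) (tendsto_id (α := ℝ))
    filter_upwards [eventually_ge_atTop a] with R hR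
    simp only [id_eq]
    have : (∫ x in a..R, ‖g x * A x‖) = ∫ x in a..R, g x * A x := by
      apply intervalIntegral.integral_congr
      intro x hx
      rw [Set.uIcc_of_le hR] at hx
      exact abs_of_nonneg (mul_nonneg (hg0 x) (hA0 x hx.1))
    rw [show (∫ x in a..R, ‖(g * A) x‖) = ∫ x in a..R, g x * A x from this]
    exact key R hR
  have hintgF : IntegrableOn (fun ξ => g ξ * F ξ) (Set.Ioi a) := by
    apply integrableOn_Ioi_of_intervalIntegral_norm_bounded M a
      (fun R : ℝ => ((hg.mul hFc).integrableOn_Ioc)) (tendsto_id (α := ℝ))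
    filter_upwards [eventually_ge_atTop a] with R hR
    simp only [id_eq]
    have h6 : (∫ x in a..R, ‖g x * F x‖) ≤ ∫ x in a..R, g x * A x := by
      apply intervalIntegral.integral_mono_on hR
        ((hg.mul hFc).norm.intervalIntegrable a R) ((hg.mul hAc).intervalIntegrable a R)
      intro x hx
      rw [Real.norm_eq_abs, Pi.mul_apply, Pi.mul_apply, abs_mul, abs_of_nonneg (hg0 x)]
      exact mul_le_mul_of_nonneg_left (hFA x hx.1) (hg0 x)
    exact h6.trans (key R hR)
  refine ⟨hintgF, ?_⟩
  have hgA_le : (∫ ξ in Set.Ioi a, g ξ * A ξ) ≤ M := by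
    apply le_of_tendsto (intervalIntegral_tendsto_integral_Ioi a hintgA (tendsto_id (α := ℝ)))
    filter_upwards [eventually_ge_atTop a] with R hR using key R hR
  have habs : |∫ ξ in Set.Ioi a, g ξ * F ξ| ≤ ∫ ξ in Set.Ioi a, g ξ * A ξ := by
    rw [← Real.norm_eq_abs]
    refine le_trans (MeasureTheory.norm_integral_le_integral_norm _) ?_
    apply setIntegral_mono_on hintgF.norm hintgA measurableSet_Ioi
    intro x hx
    rw [Real.norm_eq_abs, abs_mul, abs_of_nonneg (hg0 x)]
    exact mul_le_mul_of_nonneg_left (hFA x (le_of_lt hx)) (hg0 x)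
  have hMc : M ≤ c * ∫ ζ in Set.Ioi a, g ζ * |f ζ| := by
    rw [← MeasureTheory.integral_const_mul]
    apply setIntegral_mono_on hintψ hintc measurableSet_Ioi
    intro ζ hζ
    rw [← mul_assoc]
    exact mul_le_mul_of_nonneg_right (hψc ζ (le_of_lt hζ)) (abs_nonneg _)
  exact habs.trans (hgA_le.trans hMc)

/-- Control of double integrals weighted by the shock derivative. -/
theorem shock_weighted_double_integral_bound (vm vp ε C : ℝ) (vS : ℝ → ℝ)
    (hC : 0 < C) (hlt : vm < vp) (hε : ε = vp - vm)
    (hsmooth : ContDiff ℝ (⊤ : ℕ∞) vS) (hmono : StrictMono vS)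
    (hbot : Tendsto vS atBot (nhds vm)) (htop : Tendsto vS atTop (nhds vp))
    (hmid : vS 0 = (vm + vp) / 2)
    (hlog : ∀ ξ : ℝ, C⁻¹ * (vp - vS ξ) * (vS ξ - vm) ≤ deriv vS ξ ∧
        deriv vS ξ ≤ C * (vp - vS ξ) * (vS ξ - vm)) :
    ∃ C' : ℝ, 0 < C' ∧
      ∀ ξ₀ ∈ Set.Icc (-(1 / ε)) (1 / ε), ∀ f : ℝ → ℝ, ContDiff ℝ (⊤ : ℕ∞) f →
        Integrable (fun ζ : ℝ => deriv vS ζ * |f ζ|) →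
        |∫ ξ : ℝ, deriv vS ξ * (∫ ζ in ξ₀..ξ, f ζ)| ≤
          C' / ε * ∫ ζ : ℝ, deriv vS ζ * |f ζ| := by
  have hεpos : 0 < ε := by rw [hε]; linarith
  set g : ℝ → ℝ := deriv vS with hg
  have hgcont : Continuous g := hsmooth.continuous_deriv (by simp)
  have hdiff : Differentiable ℝ vS := hsmooth.differentiable (by simp)
  have hdvS : ∀ x, HasDerivAt vS (g x) x := fun x => (hdiff x).hasDerivAt
  have hub : ∀ x, vS x < vp := by
    intro x
    have h1 : vS (x + 1) ≤ vp := hmono.monotone.ge_of_tendsto htop (x + 1)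
    exact lt_of_lt_of_le (hmono (by linarith)) h1
  have hlb : ∀ x, vm < vS x := by
    intro x
    have h1 : vm ≤ vS (x - 1) := hmono.monotone.le_of_tendsto hbot (x - 1)
    exact lt_of_le_of_lt h1 (hmono (by linarith))
  have hgpos : ∀ x, 0 < g x := by
    intro x
    refine lt_of_lt_of_le ?_ (hlog x).1
    have h1 := hub x; have h2 := hlb x
    exact mul_pos (mul_pos (inv_pos.2 hC) (by linarith)) (by linarith)
  have hv0m : vS 0 - vm = ε / 2 := by rw [hmid, hε]; ring
  have hv0p : vp - vS 0 = ε / 2 := by rw [hmid, hε]; ring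
  set K : ℝ := ε / 2 * Real.exp (-C) with hK
  have hKpos : 0 < K := by positivity
  have hexp1 : Real.exp (-C) ≤ 1 := Real.exp_le_one_iff.2 (by linarith)
  have hprod : Real.exp (-C) * Real.exp C = 1 := by
    rw [← Real.exp_add]; simp
  -- L1 : lower bound on vS - vm to the right of -(1/ε)
  have L1 : ∀ ζ, -(1 / ε) ≤ ζ → K ≤ vS ζ - vm := by
    intro ζ hζ
    rcases le_or_gt 0 ζ with h0 | h0
    · have : vS 0 ≤ vS ζ := hmono.monotone h0
      rw [hK]; nlinarith
    · set h : ℝ → ℝ := fun ξ => (vS ξ - vm) * Real.exp (-(C * ε) * ξ) with hh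
      have hhd : ∀ x, HasDerivAt h
          ((g x - C * ε * (vS x - vm)) * Real.exp (-(C * ε) * x)) x := by
        intro x
        have he : HasDerivAt (fun ξ : ℝ => Real.exp (-(C * ε) * ξ))
            (Real.exp (-(C * ε) * x) * (-(C * ε))) x := by
          simpa using ((hasDerivAt_id x).const_mul (-(C * ε))).exp
        have := ((hdvS x).sub_const vm).mul he
        exact this.congr_deriv (by ring)
      have hanti : Antitone h := by
        apply antitone_of_deriv_nonpos (fun x => (hhd x).differentiableAt)
        intro x
        rw [(hhd x).deriv]
        have h1 : g x ≤ C * (vp - vS x) * (vS x - vm) := (hlog x).2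
        have h2 : vp - vS x ≤ ε := by rw [hε]; have := hlb x; linarith
        have h3 : (0:ℝ) < Real.exp (-(C * ε) * x) := Real.exp_pos _
        have h4 : vm ≤ vS x := (hlb x).le
        have h5 : 0 ≤ C * ((ε - (vp - vS x)) * (vS x - vm)) :=
          mul_nonneg hC.le (mul_nonneg (by linarith) (by linarith))
        exact mul_nonpos_iff.2 (Or.inr ⟨by nlinarith [h5, h1], h3.le⟩)
      have hh0 : h 0 = ε / 2 := by simp [hh, hv0m]
      have hhz : ε / 2 ≤ h ζ := by rw [← hh0]; exact hanti h0.le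
      have e1 : Real.exp (-(C * ε) * ζ) ≤ Real.exp C := by
        apply Real.exp_le_exp.2
        have hc : C * ε * (1 / ε) = C := by field_simp
        nlinarith
      have h4 : vm ≤ vS ζ := (hlb ζ).le
      have e2 : ε / 2 ≤ (vS ζ - vm) * Real.exp C := by
        calc ε / 2 ≤ (vS ζ - vm) * Real.exp (-(C * ε) * ζ) := hhz
        _ ≤ (vS ζ - vm) * Real.exp C := by
            exact mul_le_mul_of_nonneg_left e1 (by linarith)
      have e3 := mul_le_mul_of_nonneg_right e2 (Real.exp_pos (-C)).le
      rw [hK]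
      calc ε / 2 * Real.exp (-C) ≤ (vS ζ - vm) * Real.exp C * Real.exp (-C) := by
            linarith
        _ = vS ζ - vm := by rw [mul_assoc, mul_comm (Real.exp C), hprod, mul_one]
  -- L2 : lower bound on vp - vS to the left of 1/ε
  have L2 : ∀ ζ, ζ ≤ 1 / ε → K ≤ vp - vS ζ := by
    intro ζ hζ
    rcases le_or_gt ζ 0 with h0 | h0
    · have : vS ζ ≤ vS 0 := hmono.monotone h0
      rw [hK]; nlinarith
    · set h : ℝ → ℝ := fun ξ => (vp - vS ξ) * Real.exp ((C * ε) * ξ) with hh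
      have hhd : ∀ x, HasDerivAt h
          ((C * ε * (vp - vS x) - g x) * Real.exp ((C * ε) * x)) x := by
        intro x
        have he : HasDerivAt (fun ξ : ℝ => Real.exp ((C * ε) * ξ))
            (Real.exp ((C * ε) * x) * (C * ε)) x := by
          simpa using ((hasDerivAt_id x).const_mul (C * ε)).exp
        have := ((hdvS x).const_sub vp).mul he
        exact this.congr_deriv (by ring)
      have hmono2 : Monotone h := by
        apply monotone_of_deriv_nonneg (fun x => (hhd x).differentiableAt)
        intro x
        rw [(hhd x).deriv]
        have h1 : g x ≤ C * (vp - vS x) * (vS x - vm) := (hlog x).2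
        have h2 : vS x - vm ≤ ε := by rw [hε]; have := hub x; linarith
        have h3 : (0:ℝ) < Real.exp ((C * ε) * x) := Real.exp_pos _
        have h4 : vS x ≤ vp := (hub x).le
        have h5 : 0 ≤ C * ((ε - (vS x - vm)) * (vp - vS x)) :=
          mul_nonneg hC.le (mul_nonneg (by linarith) (by linarith))
        exact mul_nonneg (by nlinarith [h5, h1]) h3.le
      have hh0 : h 0 = ε / 2 := by simp [hh, hv0p]
      have hhz : ε / 2 ≤ h ζ := by rw [← hh0]; exact hmono2 h0.le
      have e1 : Real.exp ((C * ε) * ζ) ≤ Real.exp C := by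
        apply Real.exp_le_exp.2
        have hc : C * ε * (1 / ε) = C := by field_simp
        nlinarith
      have h4 : vS ζ ≤ vp := (hub ζ).le
      have e2 : ε / 2 ≤ (vp - vS ζ) * Real.exp C := by
        calc ε / 2 ≤ (vp - vS ζ) * Real.exp ((C * ε) * ζ) := hhz
        _ ≤ (vp - vS ζ) * Real.exp C := mul_le_mul_of_nonneg_left e1 (by linarith)
      have e3 := mul_le_mul_of_nonneg_right e2 (Real.exp_pos (-C)).le
      rw [hK]
      calc ε / 2 * Real.exp (-C) ≤ (vp - vS ζ) * Real.exp C * Real.exp (-C) := by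
            linarith
        _ = vp - vS ζ := by rw [mul_assoc, mul_comm (Real.exp C), hprod, mul_one]
  refine ⟨2 * C * Real.exp C, by positivity, ?_⟩
  set C' : ℝ := 2 * C * Real.exp C with hC'
  set c : ℝ := C' / ε with hcdef
  have hcpos : 0 < c := by positivity
  have hid : c * K = C := by
    rw [hcdef, hK, hC', Real.exp_neg]
    field_simp
  -- pointwise weight bounds
  have keyR : ∀ ζ, -(1 / ε) ≤ ζ → vp - vS ζ ≤ c * g ζ := by
    intro ζ hζ
    have h1 : (vp - vS ζ) * (vS ζ - vm) ≤ C * g ζ := by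
      have := (hlog ζ).1
      have h2 := mul_le_mul_of_nonneg_left this hC.le
      calc (vp - vS ζ) * (vS ζ - vm) = C * (C⁻¹ * (vp - vS ζ) * (vS ζ - vm)) := by
            field_simp
        _ ≤ C * g ζ := h2
    have h3 : (vp - vS ζ) * K ≤ (vp - vS ζ) * (vS ζ - vm) :=
      mul_le_mul_of_nonneg_left (L1 ζ hζ) (by have := hub ζ; linarith)
    have h5 : (c * g ζ) * K = C * g ζ := by rw [← hid]; ring
    have h4 : (vp - vS ζ) * K ≤ (c * g ζ) * K := by rw [h5]; exact h3.trans h1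
    exact le_of_mul_le_mul_right h4 hKpos
  have keyL : ∀ ζ, ζ ≤ 1 / ε → vS ζ - vm ≤ c * g ζ := by
    intro ζ hζ
    have h1 : (vp - vS ζ) * (vS ζ - vm) ≤ C * g ζ := by
      have := (hlog ζ).1
      have h2 := mul_le_mul_of_nonneg_left this hC.le
      calc (vp - vS ζ) * (vS ζ - vm) = C * (C⁻¹ * (vp - vS ζ) * (vS ζ - vm)) := by
            field_simp
        _ ≤ C * g ζ := h2
    have h3 : (vS ζ - vm) * K ≤ (vp - vS ζ) * (vS ζ - vm) := by
      have := mul_le_mul_of_nonneg_left (L2 ζ hζ) (by have := hlb ζ; linarith : 0 ≤ vS ζ - vm)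
      linarith [this]
    have h5 : (c * g ζ) * K = C * g ζ := by rw [← hid]; ring
    have h4 : (vS ζ - vm) * K ≤ (c * g ζ) * K := by rw [h5]; exact h3.trans h1
    exact le_of_mul_le_mul_right h4 hKpos
  rintro ξ₀ ⟨hξ₀l, hξ₀r⟩ f hfsm hW
  have hfcont : Continuous f := hfsm.continuous
  set W : ℝ → ℝ := fun ζ => g ζ * |f ζ| with hWdef
  set G : ℝ → ℝ := fun u => g u * ∫ ζ in ξ₀..u, f ζ with hG
  -- right half
  obtain ⟨hintR, hboundR⟩ := half_bound g f (fun ξ => vp - vS ξ) ξ₀ c hcpos.le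
    hgcont (fun x => (hgpos x).le) hfcont
    (fun x => (hdvS x).const_sub vp)
    (fun x => by show (0:ℝ) ≤ vp - vS x; linarith [hub x])
    (fun ζ hζ => keyR ζ (le_trans hξ₀l hζ))
    hW.integrableOn
  -- left half via reflection
  have hWneg : Integrable (fun x => W (-x)) := by
    have h1 := (Measure.measurePreserving_neg (volume : Measure ℝ)).integrable_comp_emb
      (Homeomorph.neg ℝ).measurableEmbedding (g := W)
    rw [← h1] at hW
    exact hW
  obtain ⟨hintL', hboundL'⟩ := half_bound (fun x => g (-x)) (fun x => f (-x))
    (fun x => vS (-x) - vm) (-ξ₀) c hcpos.le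
    (hgcont.comp continuous_neg) (fun x => (hgpos (-x)).le) (hfcont.comp continuous_neg)
    (fun x => by
      have h1 : HasDerivAt (fun y : ℝ => vS (-y)) (g (-x) * (-1)) x :=
        (hdvS (-x)).comp x (hasDerivAt_neg x)
      have h2 := h1.sub_const vm
      exact h2.congr_deriv (by ring))
    (fun x => by show (0:ℝ) ≤ vS (-x) - vm; linarith [hlb (-x)])
    (fun ζ hζ => keyL (-ζ) (by linarith [neg_le_neg hζ]))
    hWneg.integrableOn
  -- transfer left half statements back
  have hfun : (fun x => g (-x) * ∫ ζ in (-ξ₀)..x, f (-ζ)) = fun x => -(G (-x)) := by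
    funext x
    have h1 : (∫ ζ in (-ξ₀)..x, f (-ζ)) = ∫ ζ in (-x)..ξ₀, f ζ := by
      rw [intervalIntegral.integral_comp_neg]
      norm_num
    rw [h1, intervalIntegral.integral_symm, hG]
    ring
  rw [hfun] at hintL' hboundL'
  have hintL : IntegrableOn G (Set.Iic ξ₀) := by
    have h2 : IntegrableOn (fun x => G (-x)) (Set.Ioi (-ξ₀)) :=
      hintL'.neg.congr (Filter.Eventually.of_forall fun x => by simp)
    have h3 : IntegrableOn (fun x => G (-x)) (Set.Ici (-ξ₀)) :=
      (integrableOn_Ici_iff_integrableOn_Ioi).2 h2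
    have hpre : (Neg.neg ⁻¹' Set.Iic ξ₀ : Set ℝ) = Set.Ici (-ξ₀) := by
      ext x; simp [neg_le]
    have h5 : IntegrableOn (G ∘ Neg.neg) (Neg.neg ⁻¹' Set.Iic ξ₀) := by
      rw [hpre]; exact h3
    exact ((Measure.measurePreserving_neg (volume : Measure ℝ)).integrableOn_comp_preimage
      (Homeomorph.neg ℝ).measurableEmbedding).1 h5
  have hEL : (∫ x in Set.Ioi (-ξ₀), -(G (-x))) = -∫ x in Set.Iic ξ₀, G x := by
    rw [MeasureTheory.integral_neg]
    congr 1
    have := integral_comp_neg_Ioi (-ξ₀) G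
    rw [neg_neg] at this
    exact this
  have hEW : (∫ ζ in Set.Ioi (-ξ₀), W (-ζ)) = ∫ ζ in Set.Iic ξ₀, W ζ := by
    have := integral_comp_neg_Ioi (-ξ₀) W
    rw [neg_neg] at this
    exact this
  have hboundL : |∫ x in Set.Iic ξ₀, G x| ≤ c * ∫ ζ in Set.Iic ξ₀, W ζ := by
    rw [← hEW]
    calc |∫ x in Set.Iic ξ₀, G x| = |∫ x in Set.Ioi (-ξ₀), -(G (-x))| := by
          rw [hEL, abs_neg]
      _ ≤ c * ∫ ζ in Set.Ioi (-ξ₀), W (-ζ) := hboundL'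
  -- combine
  have hGint : Integrable G := by
    rw [← integrableOn_univ, ← Set.Iic_union_Ioi (a := ξ₀)]
    exact hintL.union hintR
  have hsplitG : (∫ x in Set.Iic ξ₀, G x) + (∫ x in Set.Ioi ξ₀, G x) = ∫ x, G x :=
    integral_Iic_add_Ioi hintL hintR
  have hsplitW : (∫ x in Set.Iic ξ₀, W x) + (∫ x in Set.Ioi ξ₀, W x) = ∫ x, W x :=
    integral_Iic_add_Ioi hW.integrableOn hW.integrableOn
  calc |∫ ξ, G ξ| = |(∫ x in Set.Iic ξ₀, G x) + (∫ x in Set.Ioi ξ₀, G x)| := by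
        rw [hsplitG]
    _ ≤ |∫ x in Set.Iic ξ₀, G x| + |∫ x in Set.Ioi ξ₀, G x| := abs_add_le _ _
    _ ≤ c * (∫ x in Set.Iic ξ₀, W x) + c * (∫ x in Set.Ioi ξ₀, W x) := by
        exact add_le_add hboundL hboundR
    _ = c * ∫ x, W x := by rw [← hsplitW]; ring
end

section
/- Let ṽ: ℝ → ℝ be a smooth increasing function with limits v₋ < v₊ at ∓∞, ṽ(0) = (v₋+v₊)/2, ε := v₊ - v₋, satisfying C⁻¹(v₊ - ṽ)(ṽ - v₋) ≤ ṽ' ≤ C(v₊ - ṽ)(ṽ - v₋) for some C > 0. Then there is a constant C' > 0 such that for any ξ₀ ∈ [-1/ε, 1/ε], any smooth f with ∫_ℝ ṽ'|f| dξ < ∞, and every ξ ∈ ℝ: |ṽ'(ξ) ∫_{ξ₀}^ξ f(ζ) dζ| ≤ C' ∫_ℝ ṽ'(ζ)|f(ζ)| dζ. -/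
open Filter MeasureTheory intervalIntegral

set_option maxHeartbeats 1000000 in
/-- Pointwise control of the shock derivative times a primitive. -/
theorem shock_weighted_pointwise_bound (vm vp ε C : ℝ) (vS : ℝ → ℝ)
    (hC : 0 < C) (hlt : vm < vp) (hε : ε = vp - vm)
    (hsmooth : ContDiff ℝ (⊤ : ℕ∞) vS) (hmono : StrictMono vS)
    (hbot : Tendsto vS atBot (nhds vm)) (htop : Tendsto vS atTop (nhds vp))
    (hmid : vS 0 = (vm + vp) / 2)
    (hlog : ∀ ξ : ℝ, C⁻¹ * (vp - vS ξ) * (vS ξ - vm) ≤ deriv vS ξ ∧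
        deriv vS ξ ≤ C * (vp - vS ξ) * (vS ξ - vm)) :
    ∃ C' : ℝ, 0 < C' ∧
      ∀ ξ₀ ∈ Set.Icc (-(1 / ε)) (1 / ε), ∀ f : ℝ → ℝ, ContDiff ℝ (⊤ : ℕ∞) f →
        Integrable (fun ζ : ℝ => deriv vS ζ * |f ζ|) →
        ∀ ξ : ℝ,
          |deriv vS ξ * (∫ ζ in ξ₀..ξ, f ζ)| ≤ C' * ∫ ζ : ℝ, deriv vS ζ * |f ζ| := by
  have hε' : 0 < ε := by rw [hε]; linarith
  have hmono' : Monotone vS := hmono.monotone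
  have hub : ∀ x, vS x ≤ vp := hmono'.ge_of_tendsto htop
  have hlb : ∀ x, vm ≤ vS x := hmono'.le_of_tendsto hbot
  have hvlt : ∀ x, vS x < vp := fun x => lt_of_lt_of_le (hmono (lt_add_one x)) (hub _)
  have hvgt : ∀ x, vm < vS x := fun x =>
    lt_of_le_of_lt (hlb (x - 1)) (hmono (by linarith))
  have hCi : C * C⁻¹ = 1 := mul_inv_cancel₀ hC.ne'
  have hpos : ∀ x, 0 < deriv vS x := by
    intro x
    have h := (hlog x).1
    have h1 : 0 < vp - vS x := by linarith [hvlt x]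
    have h2 : 0 < vS x - vm := by linarith [hvgt x]
    have : 0 < C⁻¹ * (vp - vS x) * (vS x - vm) := by positivity
    linarith
  -- lower bound on `deriv vS ζ` in terms of things with `C` on the other side
  have hlow : ∀ x, (vp - vS x) * (vS x - vm) ≤ C * deriv vS x := by
    intro x
    have h := mul_le_mul_of_nonneg_left (hlog x).1 hC.le
    calc (vp - vS x) * (vS x - vm) = C * (C⁻¹ * (vp - vS x) * (vS x - vm)) := by
          rw [show C * (C⁻¹ * (vp - vS x) * (vS x - vm))
              = (C * C⁻¹) * ((vp - vS x) * (vS x - vm)) by ring, hCi, one_mul]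
      _ ≤ C * deriv vS x := h
  have hdcont : Continuous (deriv vS) := hsmooth.continuous_deriv (by simp)
  -- minimum of deriv vS on the compact middle interval
  have hne : (Set.Icc (-(1 / ε)) (1 / ε)).Nonempty := by
    refine ⟨0, ?_, ?_⟩ <;> simp <;> positivity
  obtain ⟨z, hzmem, hzmin⟩ := isCompact_Icc.exists_isMinOn hne hdcont.continuousOn
  set m := deriv vS z with hm
  have hmpos : 0 < m := hpos z
  -- global upper bound on deriv vS
  have hMbd : ∀ x, deriv vS x ≤ C * ε * ε := by
    intro x
    have h := (hlog x).2
    have h1 : vp - vS x ≤ ε := by rw [hε]; linarith [hvgt x]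
    have h2 : vS x - vm ≤ ε := by rw [hε]; linarith [hvlt x]
    have h3 : 0 ≤ vp - vS x := by linarith [hvlt x]
    have h4 : 0 ≤ vS x - vm := by linarith [hvgt x]
    have hprod : (vp - vS x) * (vS x - vm) ≤ ε * ε := mul_le_mul h1 h2 h4 hε'.le
    nlinarith [mul_le_mul_of_nonneg_left hprod hC.le]
  set K : ℝ := C * ε * ε / m + 2 * C ^ 2 with hK
  have hKpos : 0 < K := by positivity
  -- key ratio bound
  have key : ∀ ξ₀ ∈ Set.Icc (-(1 / ε)) (1 / ε), ∀ ξ ζ : ℝ, ζ ∈ Set.uIcc ξ₀ ξ →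
      deriv vS ξ ≤ K * deriv vS ζ := by
    intro ξ₀ hξ₀ ξ ζ hζ
    rcases le_or_gt ζ (1 / ε) with hζle | hζgt
    · rcases le_or_gt (-(1 / ε)) ζ with hζge | hζlt
      · -- middle case
        have hzm : m ≤ deriv vS ζ := hzmin ⟨hζge, hζle⟩
        have : deriv vS ξ ≤ C * ε * ε / m * deriv vS ζ := by
          rw [div_mul_eq_mul_div, le_div_iff₀ hmpos]
          calc deriv vS ξ * m ≤ (C * ε * ε) * deriv vS ζ := by
                have := hMbd ξ
                nlinarith [hpos ξ, hpos ζ]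
            _ = C * ε * ε * deriv vS ζ := by ring
        rw [hK, add_mul]
        have : 0 ≤ 2 * C ^ 2 * deriv vS ζ :=
          mul_nonneg (by positivity) (hpos ζ).le
        linarith
      · -- left tail: ζ < -(1/ε), so ξ ≤ ζ
        have hξζ : ξ ≤ ζ := by
          rcases Set.mem_uIcc.mp hζ with h | h
          · exact absurd (le_trans hξ₀.1 h.1) (not_le.mpr hζlt)
          · exact h.1
        have hv1 : vS ξ ≤ vS ζ := hmono' hξζ
        have hv2 : vS ζ ≤ vS 0 := hmono' (by nlinarith [one_div_pos.mpr hε'])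
        have hζmid : ε / 2 ≤ vp - vS ζ := by rw [hε]; rw [hmid] at hv2; linarith
        have h1 := (hlog ξ).2
        have h2 := hlow ζ
        have h3 : 0 ≤ vp - vS ξ := by linarith [hvlt ξ]
        have h4 : 0 ≤ vS ξ - vm := by linarith [hvgt ξ]
        have h5 : vp - vS ξ ≤ ε := by rw [hε]; linarith [hvgt ξ]
        have h6 : vS ξ - vm ≤ vS ζ - vm := by linarith
        have h7 : 0 ≤ vS ζ - vm := by linarith [hvgt ζ]
        have hp : (vp - vS ξ) * (vS ξ - vm) ≤ ε * (vS ζ - vm) := mul_le_mul h5 h6 h4 hε'.le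
        have s1 : deriv vS ξ ≤ C * (ε * (vS ζ - vm)) := by
          linarith [mul_le_mul_of_nonneg_left hp hC.le]
        have s2 : ε * (vS ζ - vm) ≤ 2 * ((vp - vS ζ) * (vS ζ - vm)) := by
          have : ε ≤ 2 * (vp - vS ζ) := by linarith
          linarith [mul_le_mul_of_nonneg_right this h7]
        have t1 := mul_le_mul_of_nonneg_left s2 hC.le
        have t2 := mul_le_mul_of_nonneg_left h2 (by positivity : (0:ℝ) ≤ 2 * C)
        have s3 : deriv vS ξ ≤ 2 * C ^ 2 * deriv vS ζ := by linarith [s1, t1, t2]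
        rw [hK, add_mul]
        have : 0 ≤ C * ε * ε / m * deriv vS ζ :=
          mul_nonneg (le_of_lt (div_pos (by positivity) hmpos)) (hpos ζ).le
        linarith
    · -- right tail: 1/ε < ζ, so ζ ≤ ξ
      have hζξ : ζ ≤ ξ := by
        rcases Set.mem_uIcc.mp hζ with h | h
        · exact h.2
        · exact absurd (le_trans h.2 hξ₀.2) (not_le.mpr hζgt)
      have hv1 : vS ζ ≤ vS ξ := hmono' hζξ
      have hv2 : vS 0 ≤ vS ζ := hmono' (by nlinarith [one_div_pos.mpr hε'])
      have hζmid : ε / 2 ≤ vS ζ - vm := by rw [hε]; rw [hmid] at hv2; linarith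
      have h1 := (hlog ξ).2
      have h2 := hlow ζ
      have h3 : 0 ≤ vp - vS ξ := by linarith [hvlt ξ]
      have h4 : 0 ≤ vS ξ - vm := by linarith [hvgt ξ]
      have h5 : vS ξ - vm ≤ ε := by rw [hε]; linarith [hvlt ξ]
      have h6 : vp - vS ξ ≤ vp - vS ζ := by linarith
      have h7 : 0 ≤ vp - vS ζ := by linarith [hvlt ζ]
      have hp : (vp - vS ξ) * (vS ξ - vm) ≤ (vp - vS ζ) * ε := mul_le_mul h6 h5 h4 h7
      have s1 : deriv vS ξ ≤ C * ((vp - vS ζ) * ε) := by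
        linarith [mul_le_mul_of_nonneg_left hp hC.le]
      have s2 : (vp - vS ζ) * ε ≤ 2 * ((vp - vS ζ) * (vS ζ - vm)) := by
        have : ε ≤ 2 * (vS ζ - vm) := by linarith
        linarith [mul_le_mul_of_nonneg_left this h7]
      have t1 := mul_le_mul_of_nonneg_left s2 hC.le
      have t2 := mul_le_mul_of_nonneg_left h2 (by positivity : (0:ℝ) ≤ 2 * C)
      have s3 : deriv vS ξ ≤ 2 * C ^ 2 * deriv vS ζ := by linarith [s1, t1, t2]
      rw [hK, add_mul]
      have : 0 ≤ C * ε * ε / m * deriv vS ζ :=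
        mul_nonneg (le_of_lt (div_pos (by positivity) hmpos)) (hpos ζ).le
      linarith
  refine ⟨K, hKpos, ?_⟩
  intro ξ₀ hξ₀ f hf hint ξ
  have hfc : Continuous f := hf.continuous
  have hg1 : IntegrableOn (fun ζ => deriv vS ξ * |f ζ|) (Set.uIoc ξ₀ ξ) volume := by
    exact (continuous_const.mul hfc.abs).integrableOn_uIoc
  have hg2 : IntegrableOn (fun ζ => K * (deriv vS ζ * |f ζ|)) (Set.uIoc ξ₀ ξ) volume :=
    (hint.const_mul K).integrableOn
  have step1 : |∫ ζ in ξ₀..ξ, f ζ| ≤ ∫ ζ in Set.uIoc ξ₀ ξ, |f ζ| := by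
    simpa [Real.norm_eq_abs] using
      intervalIntegral.norm_integral_le_integral_norm_uIoc (f := f) (a := ξ₀) (b := ξ)
        (μ := volume)
  calc |deriv vS ξ * ∫ ζ in ξ₀..ξ, f ζ|
      = deriv vS ξ * |∫ ζ in ξ₀..ξ, f ζ| := by
        rw [abs_mul, abs_of_pos (hpos ξ)]
    _ ≤ deriv vS ξ * ∫ ζ in Set.uIoc ξ₀ ξ, |f ζ| :=
        mul_le_mul_of_nonneg_left step1 (hpos ξ).le
    _ = ∫ ζ in Set.uIoc ξ₀ ξ, deriv vS ξ * |f ζ| := by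
        rw [MeasureTheory.integral_const_mul]
    _ ≤ ∫ ζ in Set.uIoc ξ₀ ξ, K * (deriv vS ζ * |f ζ|) := by
        refine setIntegral_mono_on hg1 hg2 measurableSet_uIoc ?_
        intro ζ hζ
        have hk := key ξ₀ hξ₀ ξ ζ (Set.uIoc_subset_uIcc hζ)
        have : deriv vS ξ * |f ζ| ≤ (K * deriv vS ζ) * |f ζ| :=
          mul_le_mul_of_nonneg_right hk (abs_nonneg _)
        linarith [this]
    _ = K * ∫ ζ in Set.uIoc ξ₀ ξ, deriv vS ζ * |f ζ| := by
        rw [MeasureTheory.integral_const_mul]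
    _ ≤ K * ∫ ζ : ℝ, deriv vS ζ * |f ζ| := by
        refine mul_le_mul_of_nonneg_left ?_ hKpos.le
        exact setIntegral_le_integral hint
          (Filter.Eventually.of_forall fun ζ => mul_nonneg (hpos ζ).le (abs_nonneg _))
end
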